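/- arXiv:2107.14575 — 2 statements merged into one kernel-verified Lean document; each statement's English description precedes it below -/
import Mathlib

section
/- Fix x_t ∈ ℝ^d and W workers. Suppose for each worker i the stochastic gradient g_t^{(i)} satisfies E[g_t^{(i)}] = ∇F(x_t) and E[‖g_t^{(i)} − ∇F(x_t)‖₂²] ≤ σ², the W pairs (g_t^{(i)}, quantization randomness) are mutually independent, and conditionally on g_t^{(i)} the EWU quantizer with b_t bits (quantization level s = 2^{b_t−1} − 1) satisfies E[Q_{b_t}[g_t^{(i)}] | g_t^{(i)}] = g_t^{(i)} and E[‖Q_{b_t}[g_t^{(i)}] − g_t^{(i)}‖₂² | g_t^{(i)}] ≤ d·‖g_t^{(i)}‖_p²/(4(2^{b_t−1}−1)²). Then ĝ_t = (1/W)·Σ_i Q_{b_t}[g_t^{(i)}] satisfies E[‖ĝ_t‖₂²] ≤ ‖∇F(x_t)‖₂² + σ²/W + d·E[Ḡ_t²]/(4W(2^{b_t−1}−1)²), where Ḡ_t² = (1/W)·Σ_{i=1}^{W} ‖g_t^{(i)}‖_p². (Second claim of Lemma 1.) -/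
/-!
Conditional unbiasedness makes each worker's quantization error `Q - g` orthogonal in `L²` to
every `σ(g)`-measurable vector, in particular to `g - ∇F(x_t)`, so
`E‖Q - ∇F‖² = E‖Q - g‖² + E‖g - ∇F‖² ≤ d·E‖g‖_p² / (4s²) + σ²` with `s = 2^(b-1) - 1`.
The quantized gradients of different workers are independent with common mean `∇F(x_t)`, so the
cross terms of `‖Σᵢ (Qᵢ - ∇F)‖²` integrate to zero, and the bias–variance decomposition gives
`E‖ĝ‖² = ‖∇F‖² + W⁻² Σᵢ E‖Qᵢ - ∇F‖²`.
-/

open MeasureTheory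

/-- The `l_p` norm of a vector `g ∈ ℝ^d`. -/
noncomputable def lpNorm {d : ℕ} (p : ℝ) (g : EuclideanSpace ℝ (Fin d)) : ℝ :=
  (∑ j, |g j| ^ p) ^ (1 / p)

open ProbabilityTheory
open scoped InnerProductSpace

lemma MeasureTheory.MeasurePreserving.integral_comp_of_aestronglyMeasurable {α β G : Type*}
    [NormedAddCommGroup G] [NormedSpace ℝ G] {mα : MeasurableSpace α} {mβ : MeasurableSpace β}
    {μ : Measure α} {ν : Measure β} {f : α → β} (hf : MeasurePreserving f μ ν) {g : β → G}
    (hg : AEStronglyMeasurable g ν) :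
    ∫ x, g (f x) ∂μ = ∫ y, g y ∂ν := by
  rw [← hf.map_eq] at hg ⊢
  exact (integral_map hf.measurable.aemeasurable hg).symm

section InnerProduct

variable {Ω E : Type*} {m mΩ : MeasurableSpace Ω} {μ : Measure Ω}
  [NormedAddCommGroup E] [InnerProductSpace ℝ E]

lemma MeasureTheory.MemLp.integrable_inner {f g : Ω → E} (hf : MemLp f 2 μ) (hg : MemLp g 2 μ) :
    Integrable (fun ω => ⟪f ω, g ω⟫_ℝ) μ :=
  memLp_one_iff_integrable.mp <| hf.of_bilin (fun x y => ⟪x, y⟫_ℝ) 1 hg (hf.1.inner hg.1)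
    (ae_of_all _ fun ω => by simpa using nnnorm_inner_le_nnnorm (𝕜 := ℝ) (f ω) (g ω))

variable [CompleteSpace E]

lemma integral_inner_eq_zero_of_condExp_eq_zero [IsFiniteMeasure μ] (hm : m ≤ mΩ) {f h : Ω → E}
    (hf : MemLp f 2 μ) (hh : MemLp h 2 μ) (hhm : StronglyMeasurable[m] h)
    (hf0 : μ[f|m] =ᵐ[μ] 0) :
    ∫ ω, ⟪f ω, h ω⟫_ℝ ∂μ = 0 := by
  have pull_out : μ[fun ω => ⟪f ω, h ω⟫_ℝ|m] =ᵐ[μ] fun ω => ⟪(μ[f|m]) ω, h ω⟫_ℝ :=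
    condExp_bilin_of_stronglyMeasurable_right (innerSL ℝ) hhm (hf.integrable_inner hh)
      (hf.integrable one_le_two)
  calc ∫ ω, ⟪f ω, h ω⟫_ℝ ∂μ = ∫ ω, (μ[fun ω => ⟪f ω, h ω⟫_ℝ|m]) ω ∂μ :=
        (integral_condExp hm).symm
    _ = ∫ ω, ⟪(μ[f|m]) ω, h ω⟫_ℝ ∂μ := integral_congr_ae pull_out
    _ = ∫ _, (0 : ℝ) ∂μ := integral_congr_ae (hf0.mono fun ω hω => by simp [hω])
    _ = 0 := integral_zero _ _

lemma integral_norm_add_sq_of_condExp_eq_zero [IsFiniteMeasure μ] (hm : m ≤ mΩ) {f h : Ω → E}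
    (hf : MemLp f 2 μ) (hh : MemLp h 2 μ) (hhm : StronglyMeasurable[m] h)
    (hf0 : μ[f|m] =ᵐ[μ] 0) :
    ∫ ω, ‖f ω + h ω‖ ^ 2 ∂μ = ∫ ω, ‖f ω‖ ^ 2 ∂μ + ∫ ω, ‖h ω‖ ^ 2 ∂μ := by
  have hf2 := hf.integrable_norm_pow two_ne_zero
  have hfh := (hf.integrable_inner hh).const_mul 2
  simp_rw [norm_add_sq_real]
  rw [integral_add (hf2.fun_add hfh) (hh.integrable_norm_pow two_ne_zero), integral_add hf2 hfh,
    integral_const_mul, integral_inner_eq_zero_of_condExp_eq_zero hm hf hh hhm hf0, mul_zero,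
    add_zero]

lemma integral_norm_sq_eq_norm_integral_sq_add [IsProbabilityMeasure μ] {f : Ω → E}
    (hf : MemLp f 2 μ) :
    ∫ ω, ‖f ω‖ ^ 2 ∂μ = ‖∫ ω, f ω ∂μ‖ ^ 2 + ∫ ω, ‖f ω - ∫ ω, f ω ∂μ‖ ^ 2 ∂μ := by
  have hf0 : μ[fun ω => f ω - ∫ ω, f ω ∂μ|⊥] =ᵐ[μ] 0 := by
    rw [condExp_bot, integral_sub (hf.integrable one_le_two) (integrable_const _)]
    simp [Pi.zero_def]
  have := integral_norm_add_sq_of_condExp_eq_zero bot_le (hf.sub (memLp_const _))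
    (memLp_const (∫ ω, f ω ∂μ)) stronglyMeasurable_const hf0
  simp only [Pi.sub_apply, sub_add_cancel, integral_const, probReal_univ, one_smul] at this
  rw [this, add_comm]

lemma integral_norm_sub_sq_eq_add_of_condExp_eq [IsFiniteMeasure μ] (hm : m ≤ mΩ) {Q g : Ω → E}
    (hQ : MemLp Q 2 μ) (hg : MemLp g 2 μ) (hgm : StronglyMeasurable[m] g)
    (hQg : μ[Q|m] =ᵐ[μ] g) (c : E) :
    ∫ ω, ‖Q ω - c‖ ^ 2 ∂μ = ∫ ω, ‖Q ω - g ω‖ ^ 2 ∂μ + ∫ ω, ‖g ω - c‖ ^ 2 ∂μ := by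
  have h0 : μ[Q - g|m] =ᵐ[μ] 0 := by
    filter_upwards [condExp_sub (hQ.integrable one_le_two) (hg.integrable one_le_two) m, hQg]
      with ω h1 h2
    rw [h1, Pi.sub_apply, h2, condExp_of_stronglyMeasurable hm hgm (hg.integrable one_le_two)]
    simp
  simpa using integral_norm_add_sq_of_condExp_eq_zero hm (hQ.sub hg) (hg.sub (memLp_const c))
    (hgm.sub stronglyMeasurable_const) h0

lemma integral_norm_sum_sq_of_indepFun [MeasurableSpace E] [BorelSpace E] {ι : Type*}
    [Fintype ι] [IsFiniteMeasure μ] {X : ι → Ω → E} (hX : ∀ i, MemLp (X i) 2 μ)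
    (hmean : ∀ i, ∫ ω, X i ω ∂μ = 0)
    (hind : Pairwise fun i j => X i ⟂ᵢ[μ] X j) :
    ∫ ω, ‖∑ i, X i ω‖ ^ 2 ∂μ = ∑ i, ∫ ω, ‖X i ω‖ ^ 2 ∂μ := by
  classical
  have hcross (i j : ι) : ∫ ω, ⟪X i ω, X j ω⟫_ℝ ∂μ = if i = j then ∫ ω, ‖X i ω‖ ^ 2 ∂μ else 0 := by
    split_ifs with hij
    · simp [hij]
    · exact ((hind hij).integral_bilin ((hX i).integrable one_le_two)
        ((hX j).integrable one_le_two) (innerSL ℝ)).trans (by simp [hmean])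
  simp_rw [← real_inner_self_eq_norm_sq, sum_inner, inner_sum]
  rw [integral_finsetSum _ fun i _ => integrable_finsetSum _ fun j _ =>
    (hX i).integrable_inner (hX j)]
  simp_rw [integral_finsetSum _ fun j _ => (hX _).integrable_inner (hX j), hcross]
  simp

lemma integral_norm_inv_card_smul_sum_sq [MeasurableSpace E] [BorelSpace E]
    [IsProbabilityMeasure μ] {ι : Type*} [Fintype ι] [Nonempty ι] {X : ι → Ω → E} {c : E}
    (hX : ∀ i, MemLp (X i) 2 μ) (hmean : ∀ i, ∫ ω, X i ω ∂μ = c)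
    (hind : Pairwise fun i j => X i ⟂ᵢ[μ] X j) :
    ∫ ω, ‖(Fintype.card ι : ℝ)⁻¹ • ∑ i, X i ω‖ ^ 2 ∂μ
      = ‖c‖ ^ 2 + (∑ i, ∫ ω, ‖X i ω - c‖ ^ 2 ∂μ) / (Fintype.card ι : ℝ) ^ 2 := by
  set n : ℝ := (Fintype.card ι : ℝ)
  have hn : n ≠ 0 := Nat.cast_ne_zero.mpr Fintype.card_ne_zero
  have hsum : MemLp (fun ω => ∑ i, X i ω) 2 μ := memLp_finsetSum _ fun i _ => hX i
  have hc : n⁻¹ • ∑ _i : ι, c = c := by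
    rw [Finset.sum_const, Finset.card_univ, ← Nat.cast_smul_eq_nsmul ℝ, inv_smul_smul₀ hn]
  have havg : ∫ ω, n⁻¹ • ∑ i, X i ω ∂μ = c := by
    rw [integral_smul, integral_finsetSum _ fun i _ => (hX i).integrable one_le_two]
    simp only [hmean, hc]
  have hcentered (ω : Ω) : n⁻¹ • ∑ i, X i ω - c = n⁻¹ • ∑ i, (X i ω - c) := by
    rw [Finset.sum_sub_distrib, smul_sub, hc]
  rw [integral_norm_sq_eq_norm_integral_sq_add (f := fun ω => n⁻¹ • ∑ i, X i ω)
    (hsum.const_smul n⁻¹), havg]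
  simp_rw [hcentered, norm_smul, mul_pow, integral_const_mul]
  rw [integral_norm_sum_sq_of_indepFun (X := fun i ω => X i ω - c)
    (fun i => (hX i).sub (memLp_const c))
    (fun i => by rw [integral_sub ((hX i).integrable one_le_two) (integrable_const c), hmean]; simp)
    (fun i j hij => (hind hij).comp (measurable_id.sub_const c) (measurable_id.sub_const c))]
  simp [div_eq_inv_mul, n]

lemma integral_sum_comp_eval_pi {ι : Type*} [Fintype ι] {Ω : ι → Type*}
    [∀ i, MeasurableSpace (Ω i)] {μ : ∀ i, Measure (Ω i)} [∀ i, IsProbabilityMeasure (μ i)]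
    {f : ∀ i, Ω i → ℝ} (hf : ∀ i, Integrable (f i) (μ i)) :
    ∫ ω, ∑ i, f i (ω i) ∂Measure.pi μ = ∑ i, ∫ x, f i x ∂μ i := by
  have hf' i : Integrable (fun ω : ∀ i, Ω i => f i (ω i)) (Measure.pi μ) :=
    (measurePreserving_eval μ i).integrable_comp_of_integrable (hf i)
  rw [integral_finsetSum _ fun i _ => hf' i]
  exact Finset.sum_congr rfl fun i _ =>
    (measurePreserving_eval μ i).integral_comp_of_aestronglyMeasurable (hf i).1

lemma integral_norm_inv_card_smul_sum_sq_pi [MeasurableSpace E] [BorelSpace E] {ι : Type*}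
    [Fintype ι] [Nonempty ι] {Ω : ι → Type*} [∀ i, MeasurableSpace (Ω i)]
    {μ : ∀ i, Measure (Ω i)} [∀ i, IsProbabilityMeasure (μ i)] {X : ∀ i, Ω i → E} {c : E}
    (hX : ∀ i, MemLp (X i) 2 (μ i)) (hmean : ∀ i, ∫ x, X i x ∂μ i = c) :
    ∫ ω, ‖(Fintype.card ι : ℝ)⁻¹ • ∑ i, X i (ω i)‖ ^ 2 ∂Measure.pi μ
      = ‖c‖ ^ 2 + (∑ i, ∫ x, ‖X i x - c‖ ^ 2 ∂μ i) / (Fintype.card ι : ℝ) ^ 2 := by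
  have heval i := measurePreserving_eval μ i
  refine (integral_norm_inv_card_smul_sum_sq (X := fun i (ω : ∀ i, Ω i) => X i (ω i))
    (fun i => (hX i).comp_measurePreserving (heval i))
    (fun i => ((heval i).integral_comp_of_aestronglyMeasurable (hX i).1).trans (hmean i))
    (fun i j hij => (iIndepFun_pi fun i => (hX i).1.aemeasurable).indepFun hij)).trans ?_
  congr 2
  exact Finset.sum_congr rfl fun i _ => (heval i).integral_comp_of_aestronglyMeasurable
    (((hX i).sub (memLp_const c)).integrable_norm_pow two_ne_zero).1

lemma integral_norm_sub_sq_le_of_condExp_le [IsFiniteMeasure μ] (hm : m ≤ mΩ) {Q g : Ω → E}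
    (hQ : MemLp Q 2 μ) (hg : MemLp g 2 μ) (hgm : StronglyMeasurable[m] g)
    (hQg : μ[Q|m] =ᵐ[μ] g) {β : Ω → ℝ} (hβ : Integrable β μ)
    (hvar : μ[fun ω => ‖Q ω - g ω‖ ^ 2|m] ≤ᵐ[μ] β) (c : E) :
    ∫ ω, ‖Q ω - c‖ ^ 2 ∂μ ≤ ∫ ω, β ω ∂μ + ∫ ω, ‖g ω - c‖ ^ 2 ∂μ := by
  rw [integral_norm_sub_sq_eq_add_of_condExp_eq hm hQ hg hgm hQg c, ← integral_condExp hm]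
  exact add_le_add (integral_mono_ae integrable_condExp hβ hvar) le_rfl

end InnerProduct

lemma lpNorm_eq_norm_toLp {d : ℕ} {p : ℝ} (hp : 0 < p) (v : EuclideanSpace ℝ (Fin d)) :
    lpNorm p v = ‖WithLp.toLp (ENNReal.ofReal p) (WithLp.ofLp v)‖ := by
  rw [PiLp.norm_eq_sum (by rwa [ENNReal.toReal_ofReal hp.le])]
  simp [_root_.lpNorm, ENNReal.toReal_ofReal hp.le]

lemma MeasureTheory.MemLp.lpNorm {Ω : Type*} {mΩ : MeasurableSpace Ω} {μ : Measure Ω} {d : ℕ}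
    {p : ℝ} (hp : 1 ≤ p) {g : Ω → EuclideanSpace ℝ (Fin d)} (hg : MemLp g 2 μ) :
    MemLp (fun ω => _root_.lpNorm p (g ω)) 2 μ := by
  have : Fact (1 ≤ ENNReal.ofReal p) := ⟨by simpa using ENNReal.ofReal_le_ofReal hp⟩
  let L : EuclideanSpace ℝ (Fin d) →L[ℝ] PiLp (ENNReal.ofReal p) (fun _ : Fin d => ℝ) :=
    (PiLp.continuousLinearEquiv _ ℝ _).symm.toContinuousLinearMap ∘L
      (PiLp.continuousLinearEquiv 2 ℝ _).toContinuousLinearMap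
  simp only [lpNorm_eq_norm_toLp (zero_lt_one.trans_le hp)]
  exact (L.comp_memLp' hg).norm

theorem aggregated_gradient_second_moment_general {d W : ℕ} (hW : 0 < W) (p : ℝ) (hp : 1 ≤ p)
    (F : EuclideanSpace ℝ (Fin d) → ℝ)
    (xt : EuclideanSpace ℝ (Fin d)) (σ : ℝ) (b : ℕ)
    {Ω : Type*} [MeasurableSpace Ω]
    -- each worker `i` has its own independent randomness with law `μ i`
    (μ : Fin W → Measure Ω) [∀ i, IsProbabilityMeasure (μ i)]
    -- the stochastic gradient and the quantized gradient of worker `i`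
    (g : Fin W → Ω → EuclideanSpace ℝ (Fin d))
    (Q : Fin W → Ω → EuclideanSpace ℝ (Fin d))
    (hgmeas : ∀ i, Measurable (g i))
    (hgL2 : ∀ i, MemLp (g i) 2 (μ i)) (hQL2 : ∀ i, MemLp (Q i) 2 (μ i))
    -- unbiasedness and bounded variance of the stochastic gradients
    (hgmean : ∀ i, ∫ ω, g i ω ∂(μ i) = gradient F xt)
    (hgvar : ∀ i, ∫ ω, ‖g i ω - gradient F xt‖ ^ 2 ∂(μ i) ≤ σ ^ 2)
    -- the quantizer is unbiased conditionally on its input `g i`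
    (hQmean : ∀ i,
      (μ i)[Q i|MeasurableSpace.comap (g i) inferInstance] =ᵐ[μ i] g i)
    -- conditional quantization variance bound
    (hQvar : ∀ i,
      (μ i)[fun ω => ‖Q i ω - g i ω‖ ^ 2|MeasurableSpace.comap (g i) inferInstance]
        ≤ᵐ[μ i] fun ω => d * lpNorm p (g i ω) ^ 2 / (4 * ((2 : ℝ) ^ (b - 1) - 1) ^ 2)) :
    ∫ ω, ‖(W : ℝ)⁻¹ • ∑ i, Q i (ω i)‖ ^ 2 ∂(Measure.pi μ) ≤
      ‖gradient F xt‖ ^ 2 + σ ^ 2 / W +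
        d * (∫ ω, (W : ℝ)⁻¹ * ∑ i, lpNorm p (g i (ω i)) ^ 2 ∂(Measure.pi μ)) /
          (4 * W * ((2 : ℝ) ^ (b - 1) - 1) ^ 2) := by
  set c := gradient F xt
  set C : ℝ := 4 * ((2 : ℝ) ^ (b - 1) - 1) ^ 2
  have : Nonempty (Fin W) := ⟨⟨0, hW⟩⟩
  have hm i : MeasurableSpace.comap (g i) inferInstance ≤ ‹MeasurableSpace Ω› :=
    (hgmeas i).comap_le
  have hgm i : StronglyMeasurable[MeasurableSpace.comap (g i) inferInstance] (g i) :=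
    (comap_measurable (g i)).stronglyMeasurable
  have hQ_integral i : ∫ ω, Q i ω ∂μ i = c :=
    (integral_condExp (hm i)).symm.trans ((integral_congr_ae (hQmean i)).trans (hgmean i))
  have hL i := ((hgL2 i).lpNorm hp).integrable_sq
  have hworker i : ∫ ω, ‖Q i ω - c‖ ^ 2 ∂μ i
      ≤ d * (∫ ω, lpNorm p (g i ω) ^ 2 ∂μ i) / C + σ ^ 2 := by
    have := integral_norm_sub_sq_le_of_condExp_le (hm i) (hQL2 i) (hgL2 i) (hgm i) (hQmean i)
      (((hL i).const_mul d).div_const C) (hQvar i) c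
    rw [integral_div, integral_const_mul] at this
    linarith [hgvar i]
  have hpi := integral_norm_inv_card_smul_sum_sq_pi hQL2 hQ_integral
  rw [Fintype.card_fin] at hpi
  rw [hpi, integral_const_mul, integral_sum_comp_eval_pi hL]
  have hW₀ : (W : ℝ) ≠ 0 := by positivity
  calc _ ≤ ‖c‖ ^ 2 + (∑ i, (d * (∫ x, lpNorm p (g i x) ^ 2 ∂μ i) / C + σ ^ 2)) / W ^ 2 := by
        gcongr with i
        exact hworker i
    _ = _ := by
        rw [Finset.sum_add_distrib, ← Finset.sum_div, ← Finset.mul_sum]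
        simp only [C, Finset.sum_const, Finset.card_univ, Fintype.card_fin, nsmul_eq_mul]
        field_simp
        ring

/-- **second claim of Lemma 1.** If each worker's stochastic gradient is
unbiased with variance at most `σ²`, the workers are mutually independent (modelled by a
product probability space), and the EWU quantizer with `b_t` bits is conditionally unbiased
with conditional variance at most `d·‖g‖_p²/(4(2^{b_t−1}−1)²)`, then the aggregated gradient
`ĝ_t = (1/W)·Σᵢ Q[g_t⁽ⁱ⁾]` satisfies
`E[‖ĝ_t‖₂²] ≤ ‖∇F(x_t)‖₂² + σ²/W + d·E[Ḡ_t²]/(4W(2^{b_t−1}−1)²)`,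
where `Ḡ_t² = (1/W)·Σᵢ ‖g_t⁽ⁱ⁾‖_p²`. -/
theorem aggregated_gradient_second_moment {d W : ℕ} (hW : 0 < W) (p : ℝ) (hp : 1 ≤ p)
    (F : EuclideanSpace ℝ (Fin d) → ℝ) (hF : Differentiable ℝ F)
    (xt : EuclideanSpace ℝ (Fin d)) (σ : ℝ) (b : ℕ) (hb : 2 ≤ b)
    {Ω : Type*} [MeasurableSpace Ω]
    -- each worker `i` has its own independent randomness with law `μ i`
    (μ : Fin W → Measure Ω) [∀ i, IsProbabilityMeasure (μ i)]
    -- the stochastic gradient and the quantized gradient of worker `i`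
    (g : Fin W → Ω → EuclideanSpace ℝ (Fin d))
    (Q : Fin W → Ω → EuclideanSpace ℝ (Fin d))
    (hgmeas : ∀ i, Measurable (g i)) (hQmeas : ∀ i, Measurable (Q i))
    (hgL2 : ∀ i, MemLp (g i) 2 (μ i)) (hQL2 : ∀ i, MemLp (Q i) 2 (μ i))
    -- unbiasedness and bounded variance of the stochastic gradients
    (hgmean : ∀ i, ∫ ω, g i ω ∂(μ i) = gradient F xt)
    (hgvar : ∀ i, ∫ ω, ‖g i ω - gradient F xt‖ ^ 2 ∂(μ i) ≤ σ ^ 2)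
    -- the quantizer is unbiased conditionally on its input `g i`
    (hQmean : ∀ i,
      (μ i)[Q i|MeasurableSpace.comap (g i) inferInstance] =ᵐ[μ i] g i)
    -- conditional quantization variance bound
    (hQvar : ∀ i,
      (μ i)[fun ω => ‖Q i ω - g i ω‖ ^ 2|MeasurableSpace.comap (g i) inferInstance]
        ≤ᵐ[μ i] fun ω => d * lpNorm p (g i ω) ^ 2 / (4 * ((2 : ℝ) ^ (b - 1) - 1) ^ 2)) :
    ∫ ω, ‖(W : ℝ)⁻¹ • ∑ i, Q i (ω i)‖ ^ 2 ∂(Measure.pi μ) ≤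
      ‖gradient F xt‖ ^ 2 + σ ^ 2 / W +
        d * (∫ ω, (W : ℝ)⁻¹ * ∑ i, lpNorm p (g i (ω i)) ^ 2 ∂(Measure.pi μ)) /
          (4 * W * ((2 : ℝ) ^ (b - 1) - 1) ^ 2) :=
  aggregated_gradient_second_moment_general hW p hp F xt σ b μ g Q hgmeas hgL2 hQL2 hgmean hgvar
    hQmean hQvar
end

section
/- (Optimality of the dynamic bit allocation.) Let T be a positive integer, a_t > 0 for t = 0, …, T−1, and ε̂ > 0. Among all positive reals s_0, …, s_{T−1} satisfying Σ_{t=0}^{T−1} a_t/s_t² = ε̂, the sum Σ_{t=0}^{T−1} log₂ s_t is minimized when a_t/s_t² = ε̂/T for every t, i.e., s_t = √(T·a_t/ε̂); equivalently, for any feasible (s_t), Σ_{t=0}^{T−1} log₂ s_t ≥ (1/2)·Σ_{t=0}^{T−1} log₂(T·a_t/ε̂). -/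
open Finset

/-!
Writing `y_t = T·(a_t/s_t²)/ε̂`, the constraint says that the `y_t` are positive with mean `1`,
and `T·a_t/ε̂ = s_t²·y_t` splits the right-hand side as `Σ log₂ s_t + ½·Σ log₂ y_t`.
It remains to see `Σ log y_t ≤ 0`, which is AM–GM in the form `log y ≤ y - 1` summed over `t`.
-/

theorem Real.sum_log_nonpos_of_sum_eq_card {ι : Type*} {s : Finset ι} {y : ι → ℝ}
    (hy : ∀ i ∈ s, 0 < y i) (hsum : ∑ i ∈ s, y i = #s) : ∑ i ∈ s, Real.log (y i) ≤ 0 :=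
  calc ∑ i ∈ s, Real.log (y i) ≤ ∑ i ∈ s, (y i - 1) :=
        sum_le_sum fun i hi => Real.log_le_sub_one_of_pos (hy i hi)
    _ = 0 := by simp [sum_sub_distrib, hsum]

theorem Real.sum_logb_nonpos_of_sum_eq_card {ι : Type*} {s : Finset ι} {b : ℝ} {y : ι → ℝ}
    (hb : 1 ≤ b) (hy : ∀ i ∈ s, 0 < y i) (hsum : ∑ i ∈ s, y i = #s) :
    ∑ i ∈ s, Real.logb b (y i) ≤ 0 := by
  simp only [Real.logb, ← sum_div]
  exact div_nonpos_of_nonpos_of_nonneg (Real.sum_log_nonpos_of_sum_eq_card hy hsum)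
    (Real.log_nonneg hb)

/-- **optimality of the dynamic bit allocation.** Among positive reals
`s_0, …, s_{T−1}` with `Σ a_t/s_t² = ε̂`, the sum `Σ log₂ s_t` is minimized by the equal
allocation `a_t/s_t² = ε̂/T`: every feasible `(s_t)` satisfies
`Σ log₂ s_t ≥ (1/2)·Σ log₂(T·a_t/ε̂)`. -/
theorem bit_allocation_optimal (T : ℕ) (hT : 0 < T) (a : ℕ → ℝ)
    (ha : ∀ t ∈ range T, 0 < a t) (ε : ℝ) (hε : 0 < ε) (s : ℕ → ℝ)
    (hs : ∀ t ∈ range T, 0 < s t)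
    (hfeas : ∑ t ∈ range T, a t / s t ^ 2 = ε) :
    ∑ t ∈ range T, Real.logb 2 (s t) ≥
      1 / 2 * ∑ t ∈ range T, Real.logb 2 (T * a t / ε) := by
  set y : ℕ → ℝ := fun t => T * (a t / s t ^ 2) / ε
  have hy : ∀ t ∈ range T, 0 < y t := fun t ht => by
    have := ha t ht; have := hs t ht; positivity
  have hsum : ∑ t ∈ range T, y t = #(range T) := by
    simp only [y, ← sum_div, ← mul_sum, hfeas, card_range]
    field_simp
  have hsplit : ∀ t ∈ range T,
      Real.logb 2 (T * a t / ε) = 2 * Real.logb 2 (s t) + Real.logb 2 (y t) := fun t ht => by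
    have hst : T * a t / ε = s t ^ 2 * y t := by
      have := (hs t ht).ne'; simp only [y]; field_simp
    rw [hst, Real.logb_mul (pow_pos (hs t ht) 2).ne' (hy t ht).ne', Real.logb_pow, Nat.cast_ofNat]
  rw [sum_congr rfl hsplit, sum_add_distrib, ← mul_sum]
  linarith [Real.sum_logb_nonpos_of_sum_eq_card one_le_two hy hsum]
end
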